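/- arXiv:2605.18741 — 4 statements merged into one kernel-verified Lean document; each statement's English description precedes it below -/
import Mathlib

section
/- Suppose $P = (1-\epsilon)Q + \epsilon F$ with $0 < \epsilon < 1 - \frac{1}{\sqrt{2}}$, all measures in $\mathcal{P}_2(\mathbb{R}^m)$, and $W_2(Q, P_{\theta^*}) \leq \rho$ for some $\theta^* \in \Theta$ and model $\{P_\theta\}$. Then for every $\lambda > 0$: $\ell_\lambda(P, P_{\theta^*}) \leq \inf_{\theta \in \Theta} \ell_\lambda(P, P_\theta) + \frac{\epsilon + \epsilon^2}{\lambda} + \rho^2$. -/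
open MeasureTheory

/-- Kullback-Leibler divergence `KL(Q,P) = ∫ log (dQ/dP) dQ`. -/
noncomputable def KL {E : Type*} [MeasurableSpace E] (Q P : Measure E) : ℝ :=
  ∫ x, Real.log (Q.rnDeriv P x).toReal ∂Q

/-- Squared Wasserstein-2 distance, as the infimum over couplings of the
expected squared distance. -/
noncomputable def W2sq {m : ℕ} (P Q : Measure (EuclideanSpace ℝ (Fin m))) : ℝ :=
  sInf { c | ∃ π : Measure (EuclideanSpace ℝ (Fin m) × EuclideanSpace ℝ (Fin m)),
    π.map Prod.fst = P ∧ π.map Prod.snd = Q ∧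
    c = ∫ p, ‖p.1 - p.2‖ ^ 2 ∂π }

/-- Finite second moment. -/
def FiniteSecondMoment {m : ℕ} (P : Measure (EuclideanSpace ℝ (Fin m))) : Prop :=
  Integrable (fun x => ‖x‖ ^ 2) P

/-- The λ-robust semi-constrained Wasserstein-2 divergence
`ℓ_λ(P₁,P₂) = inf_{Q ≪ P₁} [ (1/λ) KL(Q,P₁) + W₂²(P₂,Q) ]`, the infimum ranging over
probability measures `Q` absolutely continuous w.r.t. `P₁` with finite second moment. -/
noncomputable def ellRSW {m : ℕ} (lam : ℝ) (P₁ P₂ : Measure (EuclideanSpace ℝ (Fin m))) : ℝ :=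
  sInf { c | ∃ Q : Measure (EuclideanSpace ℝ (Fin m)), IsProbabilityMeasure Q ∧
    Q ≪ P₁ ∧ FiniteSecondMoment Q ∧ c = (1 / lam) * KL Q P₁ + W2sq P₂ Q }

lemma W2sq_nonneg {m : ℕ} (P Q : Measure (EuclideanSpace ℝ (Fin m))) : 0 ≤ W2sq P Q := by
  apply Real.sInf_nonneg
  rintro c ⟨π, -, -, rfl⟩
  exact integral_nonneg fun p => by positivity

lemma KL_nonneg {E : Type*} [MeasurableSpace E] (Q P : Measure E)
    [IsProbabilityMeasure Q] [IsProbabilityMeasure P] (hQP : Q ≪ P) : 0 ≤ KL Q P := by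
  by_cases hi : Integrable (fun x => Real.log (Q.rnDeriv P x).toReal) Q
  · set f : E → ℝ := fun x => (Q.rnDeriv P x).toReal with hf
    have hfpos : ∀ᵐ x ∂Q, 0 < f x := by
      filter_upwards [Measure.rnDeriv_pos hQP, hQP.ae_le (Measure.rnDeriv_lt_top Q P)]
        with x h1 h2
      exact ENNReal.toReal_pos h1.ne' h2.ne
    -- the product f * f⁻¹ is bounded by 1, hence integrable w.r.t. P
    have hmeas : Measurable f := (Measure.measurable_rnDeriv Q P).ennreal_toReal
    have hprod : Integrable (fun x => f x • (f x)⁻¹) P := by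
      refine Integrable.mono' (integrable_const 1) ((hmeas.mul hmeas.inv).aestronglyMeasurable)
        (Filter.Eventually.of_forall fun x => ?_)
      rcases eq_or_ne (f x) 0 with h | h
      · simp [h]
      · simp [smul_eq_mul, mul_inv_cancel₀ h]
    have hg : Integrable (fun x => (f x)⁻¹) Q :=
      (integrable_rnDeriv_smul_iff hQP).mp hprod
    have hint : ∫ x, (f x)⁻¹ ∂Q ≤ 1 := by
      rw [← MeasureTheory.integral_rnDeriv_smul hQP (f := fun x => (f x)⁻¹)]
      calc ∫ x, f x • (f x)⁻¹ ∂P ≤ ∫ _x, (1 : ℝ) ∂P := by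
            refine integral_mono hprod (integrable_const 1) fun x => ?_
            rcases eq_or_ne (f x) 0 with h | h
            · simp [h]
            · simp [smul_eq_mul, mul_inv_cancel₀ h]
        _ = 1 := by simp
    have hle : ∀ᵐ x ∂Q, 1 - (f x)⁻¹ ≤ Real.log (f x) := by
      filter_upwards [hfpos] with x hx
      exact Real.one_sub_inv_le_log_of_pos hx
    have h1 : ∫ x, (1 - (f x)⁻¹) ∂Q ≤ ∫ x, Real.log (f x) ∂Q :=
      integral_mono_ae ((integrable_const 1).sub hg) hi hle
    have h2 : ∫ x, (1 - (f x)⁻¹) ∂Q = 1 - ∫ x, (f x)⁻¹ ∂Q := by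
      rw [integral_sub (integrable_const 1) hg]; simp
    have : (0 : ℝ) ≤ ∫ x, Real.log (f x) ∂Q := by
      rw [h2] at h1; linarith
    exact this
  · unfold KL
    rw [integral_undef hi]

lemma exp_neg_le_quad {x : ℝ} (hx : 0 ≤ x) : Real.exp (-x) ≤ 1 - x + x ^ 2 / 2 := by
  set φ : ℝ → ℝ := fun y => 1 - y + y ^ 2 / 2 - Real.exp (-y) with hφdef
  have hderiv : ∀ y : ℝ, HasDerivAt φ (y - 1 + Real.exp (-y)) y := by
    intro y
    have he : HasDerivAt (fun y : ℝ => Real.exp (-y)) (-Real.exp (-y)) y := by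
      simpa using (hasDerivAt_neg y).exp
    have hp : HasDerivAt (fun y : ℝ => y ^ 2 / 2) y y := by
      simpa using (hasDerivAt_pow 2 y).div_const 2
    have h1 : HasDerivAt (fun y : ℝ => 1 - y) (-1) y := by
      simpa using (hasDerivAt_id y).const_sub 1
    have := ((h1.add hp).sub he)
    rw [show y - 1 + Real.exp (-y) = -1 + y - -Real.exp (-y) by ring]
    exact this
  have hmono : MonotoneOn φ (Set.Ici (0 : ℝ)) := by
    apply monotoneOn_of_deriv_nonneg (convex_Ici 0)
    · exact (Continuous.continuousOn (by
        fun_prop))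
    · intro y _
      exact (hderiv y).differentiableAt.differentiableWithinAt
    · intro y hy
      rw [(hderiv y).deriv]
      have := Real.add_one_le_exp (-y)
      linarith
  have h0 : φ 0 = 0 := by simp [hφdef]
  have := hmono (Set.self_mem_Ici) (Set.mem_Ici.mpr hx) hx
  rw [h0] at this
  simp only [hφdef] at this
  linarith

lemma neg_log_le {ε : ℝ} (hε0 : 0 < ε) (hε1 : ε < 1 - 1 / Real.sqrt 2) :
    -Real.log (1 - ε) ≤ ε + ε ^ 2 := by
  have hs0 : (0 : ℝ) < Real.sqrt 2 := Real.sqrt_pos.mpr (by norm_num)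
  have hs2 : Real.sqrt 2 ^ 2 = 2 := Real.sq_sqrt (by norm_num)
  have hεs : ε ≤ Real.sqrt 2 - 1 := by
    have hu : (1 / Real.sqrt 2) * Real.sqrt 2 = 1 := by field_simp
    nlinarith [hu, sq_nonneg (Real.sqrt 2 - 1)]
  have h1ε : 0 < 1 - ε := by
    have : 0 < 1 / Real.sqrt 2 := by positivity
    linarith
  have ht : 0 ≤ ε + ε ^ 2 := by positivity
  have hexp : Real.exp (-(ε + ε ^ 2)) ≤ 1 - (ε + ε ^ 2) + (ε + ε ^ 2) ^ 2 / 2 :=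
    exp_neg_le_quad ht
  have hq : (ε + ε ^ 2) ^ 2 / 2 ≤ ε ^ 2 := by
    have h1 : 1 + ε ≤ Real.sqrt 2 := by linarith
    have h2 : (1 + ε) ^ 2 ≤ 2 := by nlinarith
    nlinarith [mul_le_mul_of_nonneg_left h2 (sq_nonneg ε)]
  have : Real.exp (-(ε + ε ^ 2)) ≤ 1 - ε := by nlinarith
  have hlog : -(ε + ε ^ 2) ≤ Real.log (1 - ε) := (Real.le_log_iff_exp_le h1ε).mpr this
  linarith

theorem ellRSW_robust_GH_contamination {m : ℕ} {Θ : Type*}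
    (Pmod : Θ → Measure (EuclideanSpace ℝ (Fin m)))
    (hPmod : ∀ θ, IsProbabilityMeasure (Pmod θ))
    (hPmodMom : ∀ θ, FiniteSecondMoment (Pmod θ))
    (Q F : Measure (EuclideanSpace ℝ (Fin m)))
    [IsProbabilityMeasure Q] [IsProbabilityMeasure F]
    (hQmom : FiniteSecondMoment Q) (hFmom : FiniteSecondMoment F)
    {ε : ℝ} (hε0 : 0 < ε) (hε1 : ε < 1 - 1 / Real.sqrt 2)
    (P : Measure (EuclideanSpace ℝ (Fin m)))
    (hP : P = ENNReal.ofReal (1 - ε) • Q + ENNReal.ofReal ε • F)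
    (θstar : Θ) {ρ : ℝ} (hρ : 0 < ρ)
    (hW : W2sq (Pmod θstar) Q ≤ ρ ^ 2)
    {lam : ℝ} (hlam : 0 < lam) :
    ellRSW lam P (Pmod θstar) ≤
      (⨅ θ, ellRSW lam P (Pmod θ)) + (ε + ε ^ 2) / lam + ρ ^ 2 := by
  have hs0 : (0 : ℝ) < Real.sqrt 2 := Real.sqrt_pos.mpr (by norm_num)
  have h1ε : 0 < 1 - ε := by
    have : 0 < 1 / Real.sqrt 2 := by positivity
    linarith
  have hc0 : ENNReal.ofReal (1 - ε) ≠ 0 := by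
    simp [ENNReal.ofReal_eq_zero]; linarith
  -- Q ≪ P
  have hQP : Q ≪ P := by
    rw [hP]
    exact (Measure.absolutelyContinuous_smul hc0).trans
      (Measure.absolutelyContinuous_of_le (Measure.le_add_right le_rfl))
  -- P is a probability measure
  have hPprob : IsProbabilityMeasure P := by
    constructor
    rw [hP]
    simp only [Measure.coe_add, Pi.add_apply, Measure.smul_apply, smul_eq_mul, measure_univ,
      mul_one]
    rw [← ENNReal.ofReal_add (by linarith) hε0.le]
    norm_num
  -- rnDeriv bound
  have : SigmaFinite P := inferInstance
  have : SFinite Q := inferInstance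
  have : (Q.HaveLebesgueDecomposition P) := Measure.haveLebesgueDecomposition_of_sigmaFinite Q P
  have hle : ENNReal.ofReal (1 - ε) • Q ≤ P := by
    rw [hP]; exact Measure.le_add_right le_rfl
  have hrn : ∀ᵐ x ∂Q, Q.rnDeriv P x ≤ ENNReal.ofReal (1 - ε)⁻¹ := by
    have h1 : (ENNReal.ofReal (1 - ε) • Q).rnDeriv P ≤ᵐ[P] 1 :=
      Measure.rnDeriv_le_one_of_le hle
    have h2 : (ENNReal.ofReal (1 - ε) • Q).rnDeriv P
        =ᵐ[P] ENNReal.ofReal (1 - ε) • Q.rnDeriv P :=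
      Measure.rnDeriv_smul_left_of_ne_top Q P ENNReal.ofReal_ne_top
    have h3 : ∀ᵐ x ∂P, Q.rnDeriv P x ≤ ENNReal.ofReal (1 - ε)⁻¹ := by
      filter_upwards [h1, h2] with x hx1 hx2
      rw [hx2] at hx1
      simp only [Pi.smul_apply, smul_eq_mul, Pi.one_apply] at hx1
      rw [ENNReal.ofReal_inv_of_pos h1ε]
      rw [ENNReal.le_inv_iff_mul_le, mul_comm]
      exact hx1
    exact hQP.ae_le h3
  -- KL bound
  have hKL : KL Q P ≤ ε + ε ^ 2 := by
    by_cases hi : Integrable (fun x => Real.log (Q.rnDeriv P x).toReal) Q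
    · have hfpos : ∀ᵐ x ∂Q, 0 < (Q.rnDeriv P x).toReal := by
        filter_upwards [Measure.rnDeriv_pos hQP, hQP.ae_le (Measure.rnDeriv_lt_top Q P)]
          with x hx1 hx2
        exact ENNReal.toReal_pos hx1.ne' hx2.ne
      have hlogle : ∀ᵐ x ∂Q, Real.log (Q.rnDeriv P x).toReal ≤ Real.log (1 - ε)⁻¹ := by
        filter_upwards [hrn, hfpos] with x hx hxp
        refine Real.log_le_log hxp ?_
        calc (Q.rnDeriv P x).toReal ≤ (ENNReal.ofReal (1 - ε)⁻¹).toReal :=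
              ENNReal.toReal_mono ENNReal.ofReal_ne_top hx
          _ = (1 - ε)⁻¹ := ENNReal.toReal_ofReal (by positivity)
      have : KL Q P ≤ ∫ _x, Real.log (1 - ε)⁻¹ ∂Q :=
        integral_mono_ae hi (integrable_const _) hlogle
      rw [integral_const, probReal_univ, one_smul, Real.log_inv] at this
      exact this.trans (neg_log_le hε0 hε1)
    · unfold KL
      rw [integral_undef hi]
      positivity
  -- the candidate value is in the infimum set, and the set is bounded below by 0
  have hKL0 : ∀ (Q' : Measure (EuclideanSpace ℝ (Fin m))), IsProbabilityMeasure Q' →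
      Q' ≪ P → 0 ≤ KL Q' P := fun Q' hQ' h => by
    have := hQ'
    exact KL_nonneg Q' P h
  have hbdd : ∀ (R : Measure (EuclideanSpace ℝ (Fin m))) c,
      c ∈ { c | ∃ Q' : Measure (EuclideanSpace ℝ (Fin m)), IsProbabilityMeasure Q' ∧
        Q' ≪ P ∧ FiniteSecondMoment Q' ∧ c = (1 / lam) * KL Q' P + W2sq R Q' } → 0 ≤ c := by
    rintro R c ⟨Q', hQ'p, hQ'ac, -, rfl⟩
    have h1 : 0 ≤ KL Q' P := hKL0 Q' hQ'p hQ'ac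
    have h2 : 0 ≤ W2sq R Q' := W2sq_nonneg R Q'
    have : 0 ≤ (1 / lam) * KL Q' P := by positivity
    linarith
  have hmem : (1 / lam) * KL Q P + W2sq (Pmod θstar) Q ∈
      { c | ∃ Q' : Measure (EuclideanSpace ℝ (Fin m)), IsProbabilityMeasure Q' ∧
        Q' ≪ P ∧ FiniteSecondMoment Q' ∧
        c = (1 / lam) * KL Q' P + W2sq (Pmod θstar) Q' } :=
    ⟨Q, inferInstance, hQP, hQmom, rfl⟩
  have hstep : ellRSW lam P (Pmod θstar) ≤ (1 / lam) * KL Q P + W2sq (Pmod θstar) Q :=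
    csInf_le ⟨0, fun c hc => hbdd (Pmod θstar) c hc⟩ hmem
  have hinf : 0 ≤ ⨅ θ, ellRSW lam P (Pmod θ) := by
    apply Real.iInf_nonneg
    intro θ
    exact Real.sInf_nonneg fun c hc => hbdd (Pmod θ) c hc
  have hKLterm : (1 / lam) * KL Q P ≤ (ε + ε ^ 2) / lam := by
    have h1 : (1 / lam) * KL Q P ≤ (1 / lam) * (ε + ε ^ 2) :=
      mul_le_mul_of_nonneg_left hKL (by positivity)
    have h2 : (1 / lam) * (ε + ε ^ 2) = (ε + ε ^ 2) / lam := by ring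
    linarith
  linarith
end

section
/- Fix $Y_1,\dots,Y_n \in \mathbb{R}^m$, $\lambda > 0$, $x \in \mathbb{R}^m$, and $g \in \mathbb{R}^n$. Let $j^*$ be any index achieving $\min_{j \in [n]}(\|x-Y_j\|_2^2 - g_j)$, let $p_g \in \mathbb{R}^n$ have entries $p_{g,j} = \frac{e^{-\lambda g_j}}{\sum_t e^{-\lambda g_t}}$, and let $e_{j^*}$ be the $j^*$-th standard basis vector. Then $p_g - e_{j^*}$ is a supergradient of $h_1(x,\cdot)$ at $g$: for all $\eta \in \mathbb{R}^n$, $h_1(x,\eta) \leq h_1(x,g) + (p_g - e_{j^*})^T(\eta - g)$. -/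
open MeasureTheory

/-- The dual objective integrand
`h₁(x,g) = min_j (‖x - Y_j‖² - g_j) - (1/λ) log(∑_t (1/n) exp(-λ g_t))`. -/
noncomputable def h1 {m n : ℕ} (Y : Fin n → EuclideanSpace ℝ (Fin m)) (lam : ℝ)
    (x : EuclideanSpace ℝ (Fin m)) (g : Fin n → ℝ) : ℝ :=
  (⨅ j, (‖x - Y j‖ ^ 2 - g j)) -
    (1 / lam) * Real.log (∑ t, (1 / (n : ℝ)) * Real.exp (-lam * g t))

lemma key_lse {n : ℕ} (hn : 0 < n) {lam : ℝ} (g η : Fin n → ℝ) :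
    Real.log (∑ t, Real.exp (-lam * g t)) - Real.log (∑ t, Real.exp (-lam * η t)) ≤
      ∑ j, (Real.exp (-lam * g j) / ∑ t, Real.exp (-lam * g t)) * (lam * η j - lam * g j) := by
  have hne : Nonempty (Fin n) := ⟨⟨0, hn⟩⟩
  set Bg := ∑ t, Real.exp (-lam * g t) with hBg
  set Bη := ∑ t, Real.exp (-lam * η t) with hBη
  have hBgpos : 0 < Bg := Finset.sum_pos (fun t _ => Real.exp_pos _) Finset.univ_nonempty
  have hBηpos : 0 < Bη := Finset.sum_pos (fun t _ => Real.exp_pos _) Finset.univ_nonempty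
  set p : Fin n → ℝ := fun j => Real.exp (-lam * g j) / Bg with hp
  set q : Fin n → ℝ := fun j => Real.exp (-lam * η j) / Bη with hq
  have hppos : ∀ j, 0 < p j := fun j => div_pos (Real.exp_pos _) hBgpos
  have hqpos : ∀ j, 0 < q j := fun j => div_pos (Real.exp_pos _) hBηpos
  have hps : ∑ j, p j = 1 := by
    simp only [hp, ← Finset.sum_div]
    exact div_self hBgpos.ne'
  have hqs : ∑ j, q j = 1 := by
    simp only [hq, ← Finset.sum_div]
    exact div_self hBηpos.ne'
  have hkl : ∑ j, p j * Real.log (q j / p j) ≤ 0 := by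
    calc ∑ j, p j * Real.log (q j / p j) ≤ ∑ j, (q j - p j) := by
          apply Finset.sum_le_sum
          intro j _
          have h1 := Real.log_le_sub_one_of_pos (div_pos (hqpos j) (hppos j))
          have h2 := mul_le_mul_of_nonneg_left h1 (hppos j).le
          calc p j * Real.log (q j / p j) ≤ p j * (q j / p j - 1) := h2
            _ = q j - p j := by have hp0 := (hppos j).ne'; field_simp <;> ring
      _ = 0 := by rw [Finset.sum_sub_distrib, hps, hqs]; ring
  have hlog : ∀ j, Real.log (q j / p j) =
      (lam * g j - lam * η j) + (Real.log Bg - Real.log Bη) := by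
    intro j
    rw [Real.log_div (hqpos j).ne' (hppos j).ne', hp, hq]
    rw [Real.log_div (Real.exp_ne_zero _) hBηpos.ne',
        Real.log_div (Real.exp_ne_zero _) hBgpos.ne',
        Real.log_exp, Real.log_exp]
    ring
  have hmain : ∑ j, p j * ((lam * g j - lam * η j) + (Real.log Bg - Real.log Bη)) ≤ 0 := by
    calc ∑ j, p j * ((lam * g j - lam * η j) + (Real.log Bg - Real.log Bη))
        = ∑ j, p j * Real.log (q j / p j) := by
          apply Finset.sum_congr rfl; intro j _; rw [hlog j]
      _ ≤ 0 := hkl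
  have hexp : ∑ j, p j * ((lam * g j - lam * η j) + (Real.log Bg - Real.log Bη))
      = (∑ j, p j * (lam * g j - lam * η j)) + (Real.log Bg - Real.log Bη) := by
    simp only [mul_add, Finset.sum_add_distrib, ← Finset.sum_mul, hps, one_mul]
  rw [hexp] at hmain
  have hneg : ∑ j, p j * (lam * η j - lam * g j) = -∑ j, p j * (lam * g j - lam * η j) := by
    rw [← Finset.sum_neg_distrib]
    apply Finset.sum_congr rfl
    intro j _; ring

  rw [hneg]; linarith

theorem h1_supergradient {m n : ℕ} (hn : 0 < n)
    (Y : Fin n → EuclideanSpace ℝ (Fin m)) {lam : ℝ} (hlam : 0 < lam)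
    (x : EuclideanSpace ℝ (Fin m)) (g : Fin n → ℝ)
    (jstar : Fin n)
    (hjstar : ∀ j, ‖x - Y jstar‖ ^ 2 - g jstar ≤ ‖x - Y j‖ ^ 2 - g j) :
    ∀ η : Fin n → ℝ,
      h1 Y lam x η ≤ h1 Y lam x g +
        ∑ j, ((Real.exp (-lam * g j) / ∑ t, Real.exp (-lam * g t)) -
          (if j = jstar then (1 : ℝ) else 0)) * (η j - g j) := by
  intro η
  have hne : Nonempty (Fin n) := ⟨⟨0, hn⟩⟩
  set Bg := ∑ t, Real.exp (-lam * g t) with hBgdef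
  set Bη := ∑ t, Real.exp (-lam * η t) with hBηdef
  have hBgpos : 0 < Bg := Finset.sum_pos (fun t _ => Real.exp_pos _) Finset.univ_nonempty
  have hBηpos : 0 < Bη := Finset.sum_pos (fun t _ => Real.exp_pos _) Finset.univ_nonempty
  have hnne : (n : ℝ) ≠ 0 := Nat.cast_ne_zero.mpr hn.ne'
  -- log of the weighted sums
  have hlogA : ∀ v : Fin n → ℝ, Real.log (∑ t, (1 / (n : ℝ)) * Real.exp (-lam * v t)) =
      Real.log (1 / (n : ℝ)) + Real.log (∑ t, Real.exp (-lam * v t)) := by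
    intro v
    rw [← Finset.mul_sum, Real.log_mul (by positivity)
      (Finset.sum_pos (fun t _ => Real.exp_pos _) Finset.univ_nonempty).ne']
  -- inf facts
  have hbdd : ∀ v : Fin n → ℝ, BddBelow (Set.range fun j => ‖x - Y j‖ ^ 2 - v j) :=
    fun v => (Set.finite_range _).bddBelow
  have hinfg : (⨅ j, (‖x - Y j‖ ^ 2 - g j)) = ‖x - Y jstar‖ ^ 2 - g jstar :=
    le_antisymm (ciInf_le (hbdd g) jstar) (le_ciInf hjstar)
  have hinfη : (⨅ j, (‖x - Y j‖ ^ 2 - η j)) ≤ ‖x - Y jstar‖ ^ 2 - η jstar :=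
    ciInf_le (hbdd η) jstar
  -- key log-sum-exp inequality
  have hkey := key_lse hn (lam := lam) g η
  have hsum_lam : ∑ j, (Real.exp (-lam * g j) / Bg) * (lam * η j - lam * g j)
      = lam * ∑ j, (Real.exp (-lam * g j) / Bg) * (η j - g j) := by
    rw [Finset.mul_sum]
    apply Finset.sum_congr rfl
    intro j _; ring
  rw [hsum_lam] at hkey
  -- split the RHS sum
  have hsplit : ∑ j, ((Real.exp (-lam * g j) / Bg) - (if j = jstar then (1 : ℝ) else 0)) * (η j - g j)
      = (∑ j, (Real.exp (-lam * g j) / Bg) * (η j - g j)) - (η jstar - g jstar) := by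
    have : ∀ j : Fin n, ((Real.exp (-lam * g j) / Bg) - (if j = jstar then (1:ℝ) else 0)) * (η j - g j)
        = (Real.exp (-lam * g j) / Bg) * (η j - g j) - (if j = jstar then (1:ℝ) else 0) * (η j - g j) := by
      intro j; ring
    simp only [this, Finset.sum_sub_distrib]
    congr 1
    simp [Finset.sum_ite_eq']
  rw [hsplit]
  -- finish
  simp only [h1, hlogA]
  rw [hinfg]
  have hdivle : (1 / lam) * (Real.log Bg - Real.log Bη) ≤
      ∑ j, (Real.exp (-lam * g j) / Bg) * (η j - g j) := by
    rw [one_div, inv_mul_le_iff₀ hlam]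
    exact hkey
  have h2 : ⨅ j, ‖x - Y j‖ ^ 2 - η j ≤ (‖x - Y jstar‖ ^ 2 - g jstar) - (η jstar - g jstar) := by
    calc ⨅ j, ‖x - Y j‖ ^ 2 - η j ≤ ‖x - Y jstar‖ ^ 2 - η jstar := hinfη
      _ = (‖x - Y jstar‖ ^ 2 - g jstar) - (η jstar - g jstar) := by ring
  linarith
end

section
/- Let $P \in \mathcal{P}_2(\mathbb{R}^m)$, $Y_1,\dots,Y_n \in \mathbb{R}^m$, $\lambda > 0$, and set $B_n = \max_{j \in [n]} \mathbb{E}_{X \sim P}\|X - Y_j\|_2^2$. Define $O(g) = \mathbb{E}_{X \sim P}[\min_{j\in[n]}(\|X-Y_j\|_2^2 - g_j)] - \frac{1}{\lambda}\log(\frac{1}{n}\sum_{t=1}^n e^{-\lambda g_t})$. Then for every $g \in \mathbb{R}^n$ with $g_n = 0$, $O(g) \leq B_n - \|g\|_\infty + \frac{\log n}{\lambda}$. -/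
open MeasureTheory

theorem dual_objective_coercive {m n : ℕ}
    (P : Measure (EuclideanSpace ℝ (Fin m))) [IsProbabilityMeasure P]
    (hmom : Integrable (fun x => ‖x‖ ^ 2) P)
    (Y : Fin (n + 1) → EuclideanSpace ℝ (Fin m))
    {lam : ℝ} (hlam : 0 < lam)
    (g : Fin (n + 1) → ℝ) (hg : g (Fin.last n) = 0) :
    (∫ x, (⨅ j, (‖x - Y j‖ ^ 2 - g j)) ∂P) -
        (1 / lam) * Real.log (∑ t, (1 / ((n : ℝ) + 1)) * Real.exp (-lam * g t)) ≤
      (⨆ j, ∫ x, ‖x - Y j‖ ^ 2 ∂P) - (⨆ j, |g j|) + Real.log ((n : ℝ) + 1) / lam := by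
  set f : Fin (n + 1) → EuclideanSpace ℝ (Fin m) → ℝ :=
    fun j x => ‖x - Y j‖ ^ 2 - g j with hf
  have hInt : ∀ j, Integrable (fun x => ‖x - Y j‖ ^ 2) P := by
    intro j
    have hmeas : AEStronglyMeasurable (fun x : EuclideanSpace ℝ (Fin m) => ‖x - Y j‖ ^ 2) P :=
      (((continuous_id.sub continuous_const).norm.pow 2)).aestronglyMeasurable
    refine Integrable.mono' (((hmom.const_mul 2).add (integrable_const (2 * ‖Y j‖ ^ 2)))) hmeas ?_
    filter_upwards with x
    have h1 := norm_sub_le x (Y j)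
    have h2 : (0:ℝ) ≤ ‖x - Y j‖ := norm_nonneg _
    simp only [Pi.add_apply]
    rw [Real.norm_eq_abs, abs_of_nonneg (by positivity)]
    nlinarith [sq_nonneg (‖x‖ - ‖Y j‖), norm_nonneg x, norm_nonneg (Y j)]
  have hIntf : ∀ j, Integrable (f j) P := fun j => (hInt j).sub (integrable_const _)
  have hbdd : ∀ x, BddBelow (Set.range fun j => f j x) := fun x => Set.Finite.bddBelow (Set.finite_range _)
  have hIntInf : Integrable (fun x => ⨅ j, f j x) P := by
    have hmeas : AEStronglyMeasurable (fun x => ⨅ j, f j x) P := by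
      apply Measurable.aestronglyMeasurable
      apply Measurable.iInf
      intro j
      exact (((continuous_id.sub continuous_const).norm.pow 2).sub continuous_const).measurable
    refine Integrable.mono' (integrable_finset_sum Finset.univ (fun j _ => (hIntf j).abs)) hmeas ?_
    filter_upwards with x
    rw [Real.norm_eq_abs, abs_le]
    have hsum : ∀ j, |f j x| ≤ ∑ i, |f i x| := fun j =>
      Finset.single_le_sum (f := fun i => |f i x|) (fun i _ => abs_nonneg _) (Finset.mem_univ j)
    constructor
    · refine le_ciInf fun j => ?_
      have : -|f j x| ≤ f j x := neg_abs_le _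
      linarith [hsum j]
    · calc ⨅ j, f j x ≤ f (Fin.last n) x := ciInf_le (hbdd x) _
        _ ≤ |f (Fin.last n) x| := le_abs_self _
        _ ≤ _ := hsum _
  -- choose maximizing index for |g|
  obtain ⟨j₀, hj₀⟩ : ∃ j₀, ∀ j, |g j| ≤ |g j₀| := Finite.exists_max fun j => |g j|
  have hsupg : (⨆ j, |g j|) = |g j₀| :=
    le_antisymm (ciSup_le hj₀) (le_ciSup (f := fun j => |g j|) (Set.Finite.bddAbove (Set.finite_range _)) j₀)
  have hbddB : BddAbove (Set.range fun j => ∫ x, ‖x - Y j‖ ^ 2 ∂P) :=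
    Set.Finite.bddAbove (Set.finite_range _)
  have hB : ∀ j, ∫ x, ‖x - Y j‖ ^ 2 ∂P ≤ ⨆ j, ∫ x, ‖x - Y j‖ ^ 2 ∂P := fun j => le_ciSup hbddB j
  -- bound on integral of inf by any single term
  have hintle : ∀ j, (∫ x, (⨅ j, f j x) ∂P) ≤ (⨆ j, ∫ x, ‖x - Y j‖ ^ 2 ∂P) - g j := by
    intro j
    have h1 : (∫ x, (⨅ j, f j x) ∂P) ≤ ∫ x, f j x ∂P :=
      integral_mono hIntInf (hIntf j) fun x => ciInf_le (hbdd x) j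
    have h2 : (∫ x, f j x ∂P) = (∫ x, ‖x - Y j‖ ^ 2 ∂P) - g j := by
      rw [integral_sub (hInt j) (integrable_const _), integral_const]
      simp
    linarith [hB j]
  -- bound on the log-sum-exp from below by a single term
  set S : ℝ := ∑ t, (1 / ((n : ℝ) + 1)) * Real.exp (-lam * g t) with hS
  have hSterm : ∀ j, (1 / ((n : ℝ) + 1)) * Real.exp (-lam * g j) ≤ S :=
    fun j => Finset.single_le_sum (f := fun t => (1 / ((n : ℝ) + 1)) * Real.exp (-lam * g t)) (fun i _ => by positivity) (Finset.mem_univ j)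
  have hlogS : ∀ j, -lam * g j - Real.log ((n : ℝ) + 1) ≤ Real.log S := by
    intro j
    have h := Real.log_le_log (by positivity) (hSterm j)
    rw [Real.log_mul (by positivity) (Real.exp_ne_zero _), Real.log_exp, one_div,
      Real.log_inv] at h
    linarith

  rcases le_or_gt 0 (g j₀) with hpos | hneg
  · -- ‖g‖∞ = g j₀
    have h1 := hintle j₀
    have h2 := hlogS (Fin.last n)
    rw [hg, mul_zero, zero_sub] at h2
    have h3 : -(1 / lam) * Real.log S ≤ Real.log ((n : ℝ) + 1) / lam := by
      have h4 : -Real.log ((n:ℝ)+1) / lam ≤ Real.log S / lam := by gcongr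
      have e1 : Real.log S / lam = 1 / lam * Real.log S := by ring
      have e2 : -Real.log ((n:ℝ)+1) / lam = -(Real.log ((n:ℝ)+1) / lam) := by ring
      linarith
    rw [hsupg, abs_of_nonneg hpos]
    have : (∫ x, (⨅ j, f j x) ∂P) - (1 / lam) * Real.log S ≤
        (⨆ j, ∫ x, ‖x - Y j‖ ^ 2 ∂P) - g j₀ + Real.log ((n : ℝ) + 1) / lam := by
      linarith
    simpa [hf, hS] using this
  · -- ‖g‖∞ = -g j₀
    have h1 := hintle (Fin.last n)
    rw [hg, sub_zero] at h1
    have h2 := hlogS j₀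
    have h3 : -(1 / lam) * Real.log S ≤ -|g j₀| + Real.log ((n : ℝ) + 1) / lam := by
      rw [abs_of_neg hneg]
      have h4 : (-lam * g j₀ - Real.log ((n:ℝ)+1)) / lam ≤ Real.log S / lam := by gcongr
      have e1 : Real.log S / lam = 1 / lam * Real.log S := by ring
      have e2 : (-lam * g j₀ - Real.log ((n:ℝ)+1)) / lam = -g j₀ - Real.log ((n:ℝ)+1) / lam := by
        field_simp
      linarith
    rw [hsupg]
    have : (∫ x, (⨅ j, f j x) ∂P) - (1 / lam) * Real.log S ≤
        (⨆ j, ∫ x, ‖x - Y j‖ ^ 2 ∂P) - |g j₀| + Real.log ((n : ℝ) + 1) / lam := by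
      linarith
    simpa [hf, hS] using this
end

section
/- Let $P$ and $Q$ be probability measures on $\mathbb{R}$ with finite fourth moments, and define the Gaussian-kernel MMD by $MMD^2_{\sigma_0}(P,Q) = \mathbb{E}_{X,X' \sim P} k(X,X') + \mathbb{E}_{Y,Y' \sim Q} k(Y,Y') - 2\mathbb{E}_{X\sim P, Y\sim Q} k(X,Y)$ with $k(x,y) = e^{-(x-y)^2/(2\sigma_0^2)}$. Then $\lim_{\sigma_0 \to \infty} \sigma_0^2 \, MMD^2_{\sigma_0}(P,Q) = (\mathbb{E}_{X\sim P} X - \mathbb{E}_{Y\sim Q} Y)^2$. -/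
open MeasureTheory

/-- Squared Gaussian-kernel maximum mean discrepancy between two measures on `ℝ`,
with bandwidth `σ₀`. -/
noncomputable def MMD2 (σ₀ : ℝ) (P Q : Measure ℝ) : ℝ :=
  (∫ x, ∫ y, Real.exp (-(x - y) ^ 2 / (2 * σ₀ ^ 2)) ∂P ∂P) +
  (∫ x, ∫ y, Real.exp (-(x - y) ^ 2 / (2 * σ₀ ^ 2)) ∂Q ∂Q) -
  2 * ∫ x, ∫ y, Real.exp (-(x - y) ^ 2 / (2 * σ₀ ^ 2)) ∂Q ∂P

lemma aux_int_sq {μ : Measure ℝ} [IsProbabilityMeasure μ]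
    (h : Integrable (fun x : ℝ => x ^ 4) μ) : Integrable (fun x : ℝ => x ^ 2) μ := by
  refine Integrable.mono' ((integrable_const (1 : ℝ)).add h)
    (continuous_pow 2).aestronglyMeasurable (Filter.Eventually.of_forall fun x => ?_)
  have hn : ‖x ^ 2‖ = x ^ 2 := by
    rw [Real.norm_eq_abs, abs_of_nonneg (sq_nonneg x)]
  rw [hn]
  simp only [Pi.add_apply]
  nlinarith [sq_nonneg (x ^ 2 - 1)]

lemma aux_int_id {μ : Measure ℝ} [IsProbabilityMeasure μ]
    (h : Integrable (fun x : ℝ => x ^ 4) μ) : Integrable (fun x : ℝ => x) μ := by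
  refine Integrable.mono' ((integrable_const (1 : ℝ)).add (aux_int_sq h))
    continuous_id.aestronglyMeasurable (Filter.Eventually.of_forall fun x => ?_)
  rw [Real.norm_eq_abs]
  simp only [Pi.add_apply]
  nlinarith [sq_nonneg (|x| - 1), abs_nonneg x, sq_abs x]

open Filter Real in
lemma key_tendsto (μ ν : Measure ℝ) [IsProbabilityMeasure μ] [IsProbabilityMeasure ν]
    (hμ : Integrable (fun x => x ^ 4) μ) (hν : Integrable (fun x => x ^ 4) ν) :
    Tendsto (fun σ : ℝ =>
        σ ^ 2 * ((∫ x, ∫ y, Real.exp (-(x - y) ^ 2 / (2 * σ ^ 2)) ∂ν ∂μ) - 1))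
      atTop
      (nhds (-(∫ x, x ^ 2 ∂μ) / 2 - (∫ y, y ^ 2 ∂ν) / 2 + (∫ x, x ∂μ) * (∫ y, y ∂ν))) := by
  have hμ2 := aux_int_sq hμ
  have hν2 := aux_int_sq hν
  have hμ1 := aux_int_id hμ
  have hν1 := aux_int_id hν
  -- product integrabilities
  have hx2 : Integrable (fun z : ℝ × ℝ => z.1 ^ 2) (μ.prod ν) := by
    simpa using hμ2.mul_prod (integrable_const (1 : ℝ))
  have hy2 : Integrable (fun z : ℝ × ℝ => z.2 ^ 2) (μ.prod ν) := by
    simpa using (integrable_const (1 : ℝ)).mul_prod hν2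
  have hxy : Integrable (fun z : ℝ × ℝ => z.1 * z.2) (μ.prod ν) := hμ1.mul_prod hν1
  have hbound : Integrable (fun z : ℝ × ℝ => (z.1 - z.2) ^ 2 / 2) (μ.prod ν) := by
    have heq : (fun z : ℝ × ℝ => (z.1 - z.2) ^ 2 / 2)
        = fun z : ℝ × ℝ => (z.1 ^ 2 + z.2 ^ 2 - 2 * (z.1 * z.2)) / 2 := by
      funext z; ring
    rw [heq]
    exact ((hx2.add hy2).sub (hxy.const_mul 2)).div_const 2
  -- integrability of the kernel on the product, for each σ
  have hk_int : ∀ σ : ℝ, Integrable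
      (fun z : ℝ × ℝ => Real.exp (-(z.1 - z.2) ^ 2 / (2 * σ ^ 2))) (μ.prod ν) := by
    intro σ
    refine Integrable.mono' (integrable_const (1 : ℝ))
      (Continuous.aestronglyMeasurable (by fun_prop)) (Filter.Eventually.of_forall fun z => ?_)
    rw [Real.norm_eq_abs, abs_of_nonneg (Real.exp_nonneg _), Real.exp_le_one_iff]
    apply div_nonpos_of_nonpos_of_nonneg
    · nlinarith [sq_nonneg (z.1 - z.2)]
    · positivity
  -- dominated convergence on the product measure
  have hDCT : Tendsto
      (fun σ : ℝ => ∫ z, σ ^ 2 * (Real.exp (-(z.1 - z.2) ^ 2 / (2 * σ ^ 2)) - 1) ∂(μ.prod ν))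
      atTop (nhds (∫ z : ℝ × ℝ, -(z.1 - z.2) ^ 2 / 2 ∂(μ.prod ν))) := by
    apply tendsto_integral_filter_of_dominated_convergence
      (fun z : ℝ × ℝ => (z.1 - z.2) ^ 2 / 2)
    · filter_upwards with σ
      exact Continuous.aestronglyMeasurable (by fun_prop)
    · filter_upwards [eventually_ge_atTop (1 : ℝ)] with σ hσ
      refine Filter.Eventually.of_forall fun z => ?_
      set c := (z.1 - z.2) ^ 2 with hc
      have hc0 : 0 ≤ c := sq_nonneg _
      have hσ2 : (1 : ℝ) ≤ σ ^ 2 := by nlinarith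
      have hσpos : (0 : ℝ) < σ ^ 2 := by linarith
      have h1 : Real.exp (-c / (2 * σ ^ 2)) ≤ 1 := by
        rw [Real.exp_le_one_iff]
        apply div_nonpos_of_nonpos_of_nonneg <;> nlinarith
      have h2 : 1 - c / (2 * σ ^ 2) ≤ Real.exp (-c / (2 * σ ^ 2)) := by
        have h := Real.add_one_le_exp (-c / (2 * σ ^ 2))
        have hrw : -c / (2 * σ ^ 2) = -(c / (2 * σ ^ 2)) := by ring
        rw [hrw] at h ⊢
        linarith
      rw [Real.norm_eq_abs, abs_of_nonpos (by nlinarith)]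
      have hmul : σ ^ 2 * (1 - Real.exp (-c / (2 * σ ^ 2))) ≤ σ ^ 2 * (c / (2 * σ ^ 2)) :=
        mul_le_mul_of_nonneg_left (by linarith) (le_of_lt hσpos)
      have heq : σ ^ 2 * (c / (2 * σ ^ 2)) = c / 2 := by
        field_simp
      nlinarith
    · exact hbound
    · refine Filter.Eventually.of_forall fun z => ?_
      set c := (z.1 - z.2) ^ 2 with hc
      have h0 : HasDerivAt (fun t : ℝ => -(c / 2) * t) (-(c / 2)) 0 := by
        simpa using (hasDerivAt_id (0 : ℝ)).const_mul (-(c / 2))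
      have hd : HasDerivAt (fun t : ℝ => Real.exp (-(c / 2) * t)) (-(c / 2)) 0 := by
        simpa using h0.exp
      have hs := hasDerivAt_iff_tendsto_slope.mp hd
      have hg : Tendsto (fun σ : ℝ => 1 / σ ^ 2) atTop (nhdsWithin 0 {(0 : ℝ)}ᶜ) := by
        apply tendsto_nhdsWithin_of_tendsto_nhds_of_eventually_within
        · have h2top : Tendsto (fun σ : ℝ => σ ^ 2) atTop atTop :=
            tendsto_pow_atTop (two_ne_zero)
          simpa [one_div, Function.comp_def] using tendsto_inv_atTop_zero.comp h2top
        · filter_upwards [eventually_ge_atTop (1 : ℝ)] with σ hσ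
          have hne : σ ^ 2 ≠ 0 := by nlinarith
          simp [hne]
      have hlim : -(c / 2) = -c / 2 := by ring
      rw [hlim] at hs
      refine Tendsto.congr' ?_ (hs.comp hg)
      filter_upwards [eventually_ge_atTop (1 : ℝ)] with σ hσ
      have hσ0 : σ ^ 2 ≠ 0 := by nlinarith
      have hexp : -(c / 2) * (1 / σ ^ 2) = -c / (2 * σ ^ 2) := by
        field_simp
      simp only [Function.comp_apply, slope_def_field, hexp, mul_zero, Real.exp_zero, sub_zero]
      rw [one_div, div_inv_eq_mul]
      ring
  -- rewrite the integrand over the product measure as the iterated expression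
  have hfun : ∀ σ : ℝ,
      (∫ z, σ ^ 2 * (Real.exp (-(z.1 - z.2) ^ 2 / (2 * σ ^ 2)) - 1) ∂(μ.prod ν))
        = σ ^ 2 * ((∫ x, ∫ y, Real.exp (-(x - y) ^ 2 / (2 * σ ^ 2)) ∂ν ∂μ) - 1) := by
    intro σ
    rw [integral_const_mul, integral_sub (hk_int σ) (integrable_const 1), integral_const,
      integral_prod _ (hk_int σ)]
    simp
  -- compute the limiting integral
  have hval : (∫ z : ℝ × ℝ, -(z.1 - z.2) ^ 2 / 2 ∂(μ.prod ν))
      = -(∫ x, x ^ 2 ∂μ) / 2 - (∫ y, y ^ 2 ∂ν) / 2 + (∫ x, x ∂μ) * (∫ y, y ∂ν) := by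
    have e1 : (∫ z : ℝ × ℝ, z.1 ^ 2 ∂(μ.prod ν)) = ∫ x, x ^ 2 ∂μ := by
      simpa using integral_prod_mul (μ := μ) (ν := ν) (fun x : ℝ => x ^ 2) (fun _ : ℝ => (1 : ℝ))
    have e2 : (∫ z : ℝ × ℝ, z.2 ^ 2 ∂(μ.prod ν)) = ∫ y, y ^ 2 ∂ν := by
      simpa using integral_prod_mul (μ := μ) (ν := ν) (fun _ : ℝ => (1 : ℝ)) (fun y : ℝ => y ^ 2)
    have e3 : (∫ z : ℝ × ℝ, z.1 * z.2 ∂(μ.prod ν)) = (∫ x, x ∂μ) * ∫ y, y ∂ν :=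
      integral_prod_mul (fun x : ℝ => x) (fun y : ℝ => y)
    have heq : (fun z : ℝ × ℝ => -(z.1 - z.2) ^ 2 / 2)
        = fun z : ℝ × ℝ => (-(1 : ℝ) / 2) * z.1 ^ 2 + ((-(1 : ℝ) / 2) * z.2 ^ 2 + z.1 * z.2) := by
      funext z; ring
    have i1 : Integrable (fun z : ℝ × ℝ => (-(1 : ℝ) / 2) * z.1 ^ 2) (μ.prod ν) :=
      hx2.const_mul _
    have i2 : Integrable (fun z : ℝ × ℝ => (-(1 : ℝ) / 2) * z.2 ^ 2) (μ.prod ν) :=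
      hy2.const_mul _
    have i23 : Integrable (fun z : ℝ × ℝ => (-(1 : ℝ) / 2) * z.2 ^ 2 + z.1 * z.2) (μ.prod ν) :=
      i2.add hxy
    rw [heq, integral_add i1 i23, integral_add i2 hxy, integral_const_mul, integral_const_mul,
      e1, e2, e3]
    ring
  rw [← hval]
  exact hDCT.congr hfun

theorem gaussian_MMD_large_bandwidth_limit
    (P Q : Measure ℝ) [IsProbabilityMeasure P] [IsProbabilityMeasure Q]
    (hP : Integrable (fun x => x ^ 4) P) (hQ : Integrable (fun x => x ^ 4) Q) :
    Filter.Tendsto (fun σ₀ => σ₀ ^ 2 * MMD2 σ₀ P Q) Filter.atTop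
      (nhds ((∫ x, x ∂P - ∫ y, y ∂Q) ^ 2)) := by
  have h1 := key_tendsto P P hP hP
  have h2 := key_tendsto Q Q hQ hQ
  have h3 := key_tendsto P Q hP hQ
  have hsum := (h1.add h2).sub (h3.const_mul 2)
  have hlim : ((-(∫ x, x ^ 2 ∂P) / 2 - (∫ y, y ^ 2 ∂P) / 2 + (∫ x, x ∂P) * ∫ y, y ∂P)
        + (-(∫ x, x ^ 2 ∂Q) / 2 - (∫ y, y ^ 2 ∂Q) / 2 + (∫ x, x ∂Q) * ∫ y, y ∂Q))
      - 2 * (-(∫ x, x ^ 2 ∂P) / 2 - (∫ y, y ^ 2 ∂Q) / 2 + (∫ x, x ∂P) * ∫ y, y ∂Q)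
      = (∫ x, x ∂P - ∫ y, y ∂Q) ^ 2 := by ring
  rw [← hlim]
  refine hsum.congr fun σ => ?_
  simp only [MMD2]
  ring
end
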